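/- For k > r ≥ 2, the coefficient of the monomial x_1x_2···x_k in the total cluster weight (for the forbidden pattern 12...r with weights (-1)^{#marks}) satisfies coeff(x_1···x_k) = -Σ_{u=2}^{r} coeff(x_u x_{u+1}···x_k), where coeff of a monomial of degree < r is 0 and coeff of a degree-r monomial is -1. -/

import Mathlib

structure Cluster (n r : ℕ) where
  word : List (Fin n)
  marks : List ℕ
  marks_ne : marks ≠ []
  sorted : marks.Chain' (· < ·)
  occ : ∀ s ∈ marks, s + r ≤ word.length ∧ ((word.drop s).take r).Chain' (· < ·)
  overlap : marks.Chain' (fun s t => t < s + r)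
  cover : ∀ i < word.length, ∃ s ∈ marks, s ≤ i ∧ i < s + r

noncomputable def clusterWeight {n r : ℕ} (c : Cluster n r) : MvPolynomial (Fin n) ℤ :=
  MvPolynomial.C ((-1 : ℤ) ^ c.marks.length) *
    (c.word.map fun a => (MvPolynomial.X a : MvPolynomial (Fin n) ℤ)).prod

/-- The exponent vector of the squarefree monomial `x_{u+1} x_{u+2} ⋯ x_k`
(0-indexed: variables with index in `[u, k)`). -/
noncomputable def segMono (n u k : ℕ) : Fin n →₀ ℕ :=
  Finsupp.equivFunOnFinite.symm (fun i : Fin n => if u ≤ (i : ℕ) ∧ (i : ℕ) < k then 1 else 0)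

/-!
A cluster whose weight contains the squarefree monomial `x_{u+1} ⋯ x_k` has as its word the
increasing word `u, u+1, …, k-1`, and on that word every admissible list of marks gives exactly
one cluster; so the coefficient is the signed number of mark lists for a word of length `k - u`.
For a word of length `m > r`, a mark list starts with two marks `0 < t` with `t < r`; removing
the mark `0` and shifting the others down by `t` is a sign-reversing bijection onto the mark
lists for the word of length `m - t`, and summing over `t` gives the recurrence.
-/

open List

theorem exists_le_and_succ_lt_of_isChain {r j : ℕ} :
    ∀ {a : ℕ} {M : List ℕ}, (a :: M).IsChain (fun s t => t < s + r) → a ≤ j →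
      (∃ s ∈ a :: M, j + 1 < s + r) → ∃ s ∈ a :: M, s ≤ j ∧ j + 1 < s + r
  | a, [], _, ha, ⟨s, hs, hjs⟩ => ⟨a, mem_singleton_self a, ha, by simp_all⟩
  | a, b :: M, h, ha, ⟨s, hs, hjs⟩ => by
    rw [isChain_cons_cons] at h
    by_cases hja : j + 1 < a + r
    · exact ⟨a, mem_cons_self, ha, hja⟩
    · have hsb : s ∈ b :: M := (mem_cons.1 hs).resolve_left (by rintro rfl; exact hja hjs)
      obtain ⟨s', hs', h'⟩ := exists_le_and_succ_lt_of_isChain h.2 (by omega) ⟨s, hsb, hjs⟩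
      exact ⟨s', mem_cons_of_mem a hs', h'⟩

/-- The conditions on the marks `M` of a cluster of length `m`, forgetting its word. -/
structure IsMarking (r m : ℕ) (M : List ℕ) : Prop where
  ne_nil : M ≠ []
  isChain_lt : M.IsChain (· < ·)
  add_le : ∀ s ∈ M, s + r ≤ m
  overlap : M.IsChain (fun s t => t < s + r)
  cover : ∀ i < m, ∃ s ∈ M, s ≤ i ∧ i < s + r

namespace IsMarking

variable {r m : ℕ} {M : List ℕ}

theorem head_le (h : IsMarking r m M) {s : ℕ} (hs : s ∈ M) : M.head h.ne_nil ≤ s := by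
  obtain ⟨a, M, rfl⟩ := exists_cons_of_ne_nil h.ne_nil
  rcases mem_cons.1 hs with rfl | hs
  · exact le_rfl
  · exact (pairwise_cons.1 (isChain_iff_pairwise.1 h.isChain_lt)).1 s hs |>.le

theorem exists_le_and_succ_lt (h : IsMarking r m M) {i : ℕ} (hi : i + 1 < m) :
    ∃ s ∈ M, s ≤ i ∧ i + 1 < s + r := by
  obtain ⟨s, hs, hsi, -⟩ := h.cover i (by omega)
  obtain ⟨s', hs', -, hs'i⟩ := h.cover (i + 1) hi
  have hle := h.head_le hs
  obtain ⟨a, M, rfl⟩ := exists_cons_of_ne_nil h.ne_nil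
  rw [head_cons] at hle
  exact exists_le_and_succ_lt_of_isChain h.overlap (by omega) ⟨s', hs', hs'i⟩

theorem eq_zero_cons (h : IsMarking r m M) (hm : 0 < m) : ∃ T, M = 0 :: T := by
  obtain ⟨s, hs, hs0, -⟩ := h.cover 0 hm
  have hle := h.head_le hs
  obtain ⟨a, T, rfl⟩ := exists_cons_of_ne_nil h.ne_nil
  rw [head_cons] at hle
  exact ⟨T, by rw [Nat.le_zero.1 (hle.trans hs0)]⟩

theorem sublist_range (h : IsMarking r m M) : M <+ range (m + 1) :=
  sublist_of_subperm_of_pairwise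
    ((isChain_iff_pairwise.1 h.isChain_lt).nodup.subperm
      fun s hs => mem_range.2 (by have := h.add_le s hs; omega))
    (isChain_iff_pairwise.1 h.isChain_lt) pairwise_lt_range

end IsMarking

theorem finite_setOf_isMarking (r m : ℕ) : {M | IsMarking r m M}.Finite :=
  ((range (m + 1)).sublists.toFinset.finite_toSet).subset
    fun _ h => by simpa using h.sublist_range

def shiftCons (t : ℕ) (M : List ℕ) : List ℕ := 0 :: M.map (· + t)

theorem shiftCons_injective (t : ℕ) : Function.Injective (shiftCons t) :=
  fun _ _ h => (map_injective_iff.2 (add_left_injective t)) (cons_injective h)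

theorem IsMarking.of_shiftCons {r m t : ℕ} {T : List ℕ}
    (h : IsMarking r m (shiftCons t (0 :: T))) : IsMarking r (m - t) (0 :: T) where
  ne_nil := cons_ne_nil 0 T
  isChain_lt := by
    have := (isChain_cons_cons.1 h.isChain_lt).2
    exact ((isChain_map (· + t)).1 this).imp fun _ _ h => by omega
  add_le s hs := by
    have := h.add_le (s + t) (mem_cons_of_mem 0 (mem_map_of_mem hs))
    omega
  overlap := by
    have := (isChain_cons_cons.1 h.overlap).2
    exact ((isChain_map (· + t)).1 this).imp fun _ _ h => by omega
  cover i hi := by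
    obtain ⟨s, hs, hsi, his⟩ := h.cover (i + t) (by omega)
    rcases mem_cons.1 hs with rfl | hs
    · exact ⟨0, mem_cons_self, Nat.zero_le i, by omega⟩
    · obtain ⟨s', hs', rfl⟩ := mem_map.1 hs
      exact ⟨s', hs', by omega, by omega⟩

theorem isMarking_shiftCons {r m t : ℕ} {T : List ℕ} (h : IsMarking r (m - t) (0 :: T))
    (ht : 0 < t) (htr : t < r) (hrm : r ≤ m) : IsMarking r m (shiftCons t (0 :: T)) where
  ne_nil := cons_ne_nil _ _
  isChain_lt := by
    refine isChain_cons_cons.2 ⟨by simpa using ht, ?_⟩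
    exact (isChain_map (· + t)).2 (h.isChain_lt.imp fun _ _ h => by omega)
  add_le s hs := by
    rcases mem_cons.1 hs with rfl | hs
    · omega
    · obtain ⟨s', hs', rfl⟩ := mem_map.1 hs
      have := h.add_le s' hs'
      omega
  overlap := by
    refine isChain_cons_cons.2 ⟨by simpa using htr, ?_⟩
    exact (isChain_map (· + t)).2 (h.overlap.imp fun _ _ h => by omega)
  cover i hi := by
    by_cases hit : i < t
    · exact ⟨0, mem_cons_self, Nat.zero_le i, by omega⟩
    · obtain ⟨s, hs, hsi, his⟩ := h.cover (i - t) (by omega)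
      exact ⟨s + t, mem_cons_of_mem 0 (mem_map_of_mem hs), by omega, by omega⟩

theorem IsMarking.exists_eq_shiftCons {r m : ℕ} {M : List ℕ} (h : IsMarking r m M)
    (hrm : r < m) : ∃ t ∈ Finset.Icc 1 (r - 1), ∃ T, M = shiftCons t (0 :: T) := by
  obtain ⟨M, rfl⟩ := h.eq_zero_cons (by omega)
  obtain ⟨t, T, rfl⟩ : ∃ t T, M = t :: T := by
    refine exists_cons_of_ne_nil fun hM => ?_
    obtain ⟨s, hs, -, hs'⟩ := h.cover (m - 1) (by omega)
    subst hM
    rw [mem_singleton] at hs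
    omega
  have ht := (isChain_cons_cons.1 h.isChain_lt).1
  have htr := (isChain_cons_cons.1 h.overlap).1
  have hT : ∀ s ∈ T, t < s :=
    (pairwise_cons.1 (isChain_iff_pairwise.1 (isChain_cons_cons.1 h.isChain_lt).2)).1
  refine ⟨t, Finset.mem_Icc.2 ⟨ht, by omega⟩, T.map (· - t), ?_⟩
  simp only [shiftCons, map_cons, map_map, zero_add]
  congr
  exact (map_congr_left fun s hs => by have := hT s hs; simp; omega).trans (map_id T) |>.symm

noncomputable def signedMarkingCount (r m : ℕ) : ℤ :=
  ∑ᶠ M ∈ {M | IsMarking r m M}, (-1) ^ M.length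

theorem setOf_isMarking_eq_biUnion {r m : ℕ} (hrm : r < m) :
    {M | IsMarking r m M} =
      ⋃ t ∈ (Finset.Icc 1 (r - 1) : Set ℕ), shiftCons t '' {M | IsMarking r (m - t) M} := by
  ext M
  simp only [Set.mem_ofPred_eq, Set.mem_iUnion, Set.mem_image, Finset.coe_Icc, Set.mem_Icc]
  constructor
  · intro h
    obtain ⟨t, ht, T, rfl⟩ := h.exists_eq_shiftCons hrm
    rw [Finset.mem_Icc] at ht
    exact ⟨t, ht, 0 :: T, h.of_shiftCons, rfl⟩
  · rintro ⟨t, ht, M', hM', rfl⟩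
    obtain ⟨T, rfl⟩ := hM'.eq_zero_cons (by omega)
    exact isMarking_shiftCons hM' (by omega) (by omega) hrm.le

theorem signedMarkingCount_eq_neg_sum {r m : ℕ} (hrm : r < m) :
    signedMarkingCount r m = -∑ t ∈ Finset.Icc 1 (r - 1), signedMarkingCount r (m - t) := by
  have hdisj : (Finset.Icc 1 (r - 1) : Set ℕ).PairwiseDisjoint
      fun t => shiftCons t '' {M | IsMarking r (m - t) M} := by
    intro t ht t' ht' hne
    simp only [Finset.coe_Icc, Set.mem_Icc] at ht ht'
    refine Set.disjoint_left.2 ?_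
    rintro _ ⟨M, hM, rfl⟩ ⟨M', hM', h⟩
    obtain ⟨T, rfl⟩ := IsMarking.eq_zero_cons hM (by omega)
    obtain ⟨T', rfl⟩ := IsMarking.eq_zero_cons hM' (by omega)
    simp only [shiftCons, map_cons, zero_add, cons.injEq] at h
    exact hne h.2.1.symm
  rw [signedMarkingCount, setOf_isMarking_eq_biUnion hrm,
    finsum_mem_biUnion hdisj (Finset.finite_toSet _) fun _ _ =>
      (finite_setOf_isMarking r _).image _,
    finsum_mem_coe_finset, ← Finset.sum_neg_distrib]
  refine Finset.sum_congr rfl fun t _ => ?_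
  rw [finsum_mem_image (shiftCons_injective t).injOn, signedMarkingCount,
    ← finsum_mem_neg_distrib _ (finite_setOf_isMarking r _)]
  simp [shiftCons, pow_succ]

namespace Cluster

variable {n r : ℕ} (c : Cluster n r)

theorem isMarking : IsMarking r c.word.length c.marks :=
  ⟨c.marks_ne, c.sorted, fun s hs => (c.occ s hs).1, c.overlap, c.cover⟩

theorem isChain_word : c.word.IsChain (· < ·) := by
  refine isChain_iff_getElem.2 fun i hi => ?_
  obtain ⟨s, hs, hsi, his⟩ := c.isMarking.exists_le_and_succ_lt hi
  obtain ⟨hsr, hwin⟩ := c.occ s hs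
  have := (hwin : ((c.word.drop s).take r).IsChain (· < ·)).getElem (i - s) (by simp; omega)
  simp only [getElem_take, getElem_drop, show s + (i - s) = i by omega,
    show s + (i - s + 1) = i + 1 by omega] at this
  exact this

theorem pairwise_word : c.word.Pairwise (· < ·) := isChain_iff_pairwise.1 c.isChain_word

theorem word_sublist : c.word <+ finRange n :=
  sublist_of_subperm_of_pairwise (c.pairwise_word.nodup.subperm fun i _ => mem_finRange i)
    c.pairwise_word (pairwise_lt_finRange n)

theorem marks_sublist : c.marks <+ range (n + 1) := by
  have := c.word_sublist.length_le
  rw [length_finRange] at this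
  exact c.isMarking.sublist_range.trans ((range_sublist).2 (by omega))

theorem ext {c d : Cluster n r} (hw : c.word = d.word) (hm : c.marks = d.marks) : c = d := by
  cases c; cases d; cases hw; cases hm; rfl

instance : Finite (Cluster n r) :=
  Finite.of_injective
    (fun c => ((⟨c.word, mem_sublists.2 c.word_sublist⟩ : {w // w ∈ (finRange n).sublists}),
      (⟨c.marks, mem_sublists.2 c.marks_sublist⟩ : {M // M ∈ (range (n + 1)).sublists})))
    fun _ _ h => ext (congrArg (·.1.1) h) (congrArg (·.2.1) h)

theorem bijOn_marks {w : List (Fin n)} (hw : w.IsChain (· < ·)) :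
    Set.BijOn marks {c : Cluster n r | c.word = w} {M | IsMarking r w.length M} := by
  refine ⟨fun c (hc : c.word = w) => hc ▸ c.isMarking, ?_, fun M hM => ?_⟩
  · exact fun c (hc : c.word = w) d (hd : d.word = w) hcd => ext (hc.trans hd.symm) hcd
  · exact ⟨⟨w, M, hM.ne_nil, hM.isChain_lt,
      fun s hs => ⟨hM.add_le s hs, hw.sublist ((take_sublist r _).trans (drop_sublist s w))⟩,
      hM.overlap, hM.cover⟩, rfl, rfl⟩

end Cluster

theorem MvPolynomial.prod_map_X {σ R : Type*} [DecidableEq σ] [CommSemiring R] (w : List σ) :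
    (w.map (X : σ → MvPolynomial σ R)).prod =
      monomial (Multiset.toFinsupp (w : Multiset σ)) 1 := by
  induction w with
  | nil => simp
  | cons a w ih =>
    rw [map_cons, prod_cons, ih, ← Multiset.cons_coe, ← Multiset.singleton_add,
      Multiset.toFinsupp_add, Multiset.toFinsupp_singleton, X, monomial_mul, one_mul]

theorem coeff_clusterWeight {n r : ℕ} (m : Fin n →₀ ℕ) (c : Cluster n r) :
    (clusterWeight c).coeff m =
      if Multiset.toFinsupp (c.word : Multiset (Fin n)) = m then (-1) ^ c.marks.length else 0 := by
  rw [clusterWeight, MvPolynomial.prod_map_X, MvPolynomial.coeff_C_mul,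
    MvPolynomial.coeff_monomial]
  split_ifs <;> simp

def segWord (n u k : ℕ) (h : k ≤ n) : List (Fin n) :=
  ofFn fun j : Fin (k - u) => ⟨u + j, by omega⟩

section segWord

variable {n u k : ℕ} (h : k ≤ n)

theorem length_segWord : (segWord n u k h).length = k - u := length_ofFn

theorem mem_segWord {i : Fin n} : i ∈ segWord n u k h ↔ u ≤ i ∧ (i : ℕ) < k := by
  simp only [segWord, mem_ofFn]
  constructor
  · rintro ⟨j, rfl⟩
    exact ⟨Nat.le_add_right u j, by have := j.isLt; dsimp only; omega⟩
  · rintro ⟨hui, hik⟩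
    exact ⟨⟨i - u, by omega⟩, Fin.ext (by simp; omega)⟩

theorem isChain_lt_segWord : (segWord n u k h).IsChain (· < ·) :=
  isChain_iff_pairwise.2 <| pairwise_ofFn.2 fun _ _ hij => Fin.mk_lt_mk.2 (by simpa using hij)

theorem toFinsupp_eq_segMono_iff {w : List (Fin n)} (hw : w.Nodup) :
    Multiset.toFinsupp (w : Multiset (Fin n)) = segMono n u k ↔
      ∀ i, i ∈ w ↔ u ≤ i ∧ (i : ℕ) < k := by
  refine Finsupp.ext_iff.trans (forall_congr' fun i => ?_)
  rw [Multiset.toFinsupp_apply, Multiset.count_eq_of_nodup (Multiset.coe_nodup.2 hw), segMono,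
    Finsupp.coe_equivFunOnFinite_symm]
  split_ifs <;> simp_all

theorem eq_segWord_iff {w : List (Fin n)} (hw : w.Pairwise (· < ·)) :
    w = segWord n u k h ↔ Multiset.toFinsupp (w : Multiset (Fin n)) = segMono n u k := by
  rw [toFinsupp_eq_segMono_iff hw.nodup]
  constructor
  · rintro rfl i
    exact mem_segWord h
  · intro hmem
    exact hw.eq_of_mem_iff (isChain_iff_pairwise.1 (isChain_lt_segWord h))
      fun i => (hmem i).trans (mem_segWord h).symm

end segWord

theorem coeff_segMono_finsum_clusterWeight {n r u k : ℕ} (h : k ≤ n) :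
    (∑ᶠ c : Cluster n r, clusterWeight c).coeff (segMono n u k) =
      signedMarkingCount r (k - u) := by
  rw [← MvPolynomial.coeffAddMonoidHom_apply, AddMonoidHom.map_finsum _ (Set.toFinite _),
    ← length_segWord h (u := u), signedMarkingCount,
    ← finsum_mem_eq_of_bijOn _ (Cluster.bijOn_marks (isChain_lt_segWord h)) fun _ _ => rfl,
    finsum_mem_def]
  refine finsum_congr fun c => ?_
  rw [MvPolynomial.coeffAddMonoidHom_apply, coeff_clusterWeight, Set.indicator_apply]
  exact if_congr (eq_segWord_iff h c.pairwise_word).symm rfl rfl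

theorem cluster_coeff_recurrence_general (n r k : ℕ) (hk : r < k) (hkn : k ≤ n) :
    MvPolynomial.coeff (segMono n 0 k) (∑ᶠ c : Cluster n r, clusterWeight c) =
      -∑ u ∈ Finset.Icc 1 (r - 1),
          MvPolynomial.coeff (segMono n u k) (∑ᶠ c : Cluster n r, clusterWeight c) := by
  simp only [coeff_segMono_finsum_clusterWeight hkn]
  exact signedMarkingCount_eq_neg_sum hk

/-- For `k > r ≥ 2`, the coefficient of `x_1 x_2 ⋯ x_k` in the total cluster
weight satisfies `coeff(x_1⋯x_k) = -∑_{u=2}^{r} coeff(x_u⋯x_k)`. -/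
theorem cluster_coeff_recurrence (n r k : ℕ) (hr : 2 ≤ r) (hk : r < k) (hkn : k ≤ n) :
    MvPolynomial.coeff (segMono n 0 k) (∑ᶠ c : Cluster n r, clusterWeight c) =
      -∑ u ∈ Finset.Icc 1 (r - 1),
          MvPolynomial.coeff (segMono n u k) (∑ᶠ c : Cluster n r, clusterWeight c) :=
  cluster_coeff_recurrence_general n r k hk hkn
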